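/- Let G be a connected finite simple graph on n ≥ 3 vertices with q(G) = 2 and minimum degree at least 3, and let v be a vertex of G. Suppose that every vertex of N_i(v) for 2 ≤ i ≤ ε(v) − 1 has exactly two predecessors, and that each set N_i(v) for 1 ≤ i ≤ ε(v) − 1 is an independent set. Then |N_{j−1}(v)| ≤ |N_j(v)| for every 1 ≤ j ≤ ε(v) − 1. -/

import Mathlib

open Matrix

/-- `SOfGraph G` is the set of real symmetric matrices whose off-diagonal zero
pattern is described by the graph `G` (diagonal entries unrestricted). -/
def SOfGraph {V : Type*} [Fintype V] [DecidableEq V] (G : SimpleGraph V) :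
    Set (Matrix V V ℝ) :=
  {A | A.IsSymm ∧ ∀ i j : V, i ≠ j → (A i j ≠ 0 ↔ G.Adj i j)}

/-- `qGraph G` is the minimum number of distinct eigenvalues over matrices in `SOfGraph G`. -/
noncomputable def qGraph {V : Type*} [Fintype V] [DecidableEq V] (G : SimpleGraph V) : ℕ :=
  sInf ((fun A => (spectrum ℝ A).ncard) '' SOfGraph G)

/-- Eccentricity of a vertex: maximum graph distance to any vertex. -/
noncomputable def graphEccent {V : Type*} [Fintype V] (G : SimpleGraph V) (v : V) : ℕ :=
  Finset.univ.sup fun w => G.dist v w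

/-- Double-ended candle `G_k` on `2k` vertices: vertex `i` lies in level `(i+1)/2`,
so level `0` and level `k` have one vertex each and intermediate levels have two;
two vertices are adjacent iff they lie in consecutive levels. -/
def doubleCandle (k : ℕ) : SimpleGraph (Fin (2 * k)) :=
  SimpleGraph.fromRel fun a b => (a.val + 1) / 2 + 1 = (b.val + 1) / 2

/-- Single-ended candle `G'_k` on `2k+1` vertices: vertex `i` lies in level `(i+1)/2`,
so level `0` has one vertex and levels `1,…,k` have two vertices each; two distinct
vertices are adjacent iff they lie in consecutive levels or both lie in level `k`. -/
def singleCandle (k : ℕ) : SimpleGraph (Fin (2 * k + 1)) :=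
  SimpleGraph.fromRel fun a b =>
    (a.val + 1) / 2 + 1 = (b.val + 1) / 2 ∨ ((a.val + 1) / 2 = k ∧ (b.val + 1) / 2 = k)

/-!
A matrix `A ∈ S(G)` with two distinct eigenvalues `λ, μ` satisfies `(A - λ)(A - μ) = 0`, so
`(A²)ᵤₓ = 0` whenever `u ≠ x` are non-adjacent; as `(A²)ᵤₓ` is a sum over the common neighbours
of `u` and `x`, no two such vertices have exactly one common neighbour. Now let
`j ≤ ε(v) - 1`. A vertex `u` of a level `N_i(v)` with `i ≤ j` has no neighbour in its own level,
at most two predecessors and degree at least three, so it has a successor. If `u ∈ N_{j-1}(v)` had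
a single successor `s`, then `s` would be the unique common neighbour of `u` and any successor
of `s`. Hence every vertex of `N_{j-1}(v)` has at least two successors, every vertex of `N_j(v)`
has two predecessors, and counting the edges between the two levels gives the inequality.
-/

theorem IsSelfAdjoint.sub_algebraMap_mul_sub_algebraMap_eq_zero {A : Type*} [Ring A] [StarRing A]
    [Algebra ℝ A] [TopologicalSpace A] [ContinuousFunctionalCalculus ℝ A IsSelfAdjoint]
    {a : A} (ha : IsSelfAdjoint a) {l m : ℝ} (hspec : spectrum ℝ a ⊆ {l, m}) :
    (a - algebraMap ℝ A l) * (a - algebraMap ℝ A m) = 0 := by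
  calc (a - algebraMap ℝ A l) * (a - algebraMap ℝ A m)
      = cfc (fun x : ℝ => (x - l) * (x - m)) a := by
        rw [cfc_mul .., cfc_sub .., cfc_sub .., cfc_id' .., cfc_const l a, cfc_const m a]
    _ = cfc (fun _ : ℝ => (0 : ℝ)) a := cfc_congr fun x hx => by
        rcases hspec hx with rfl | rfl <;> simp
    _ = 0 := cfc_zero ..

section SOfGraph

variable {V : Type*} [Fintype V] [DecidableEq V] {G : SimpleGraph V}

theorem commonNeighbors_ne_singleton_of_mem_SOfGraph {A : Matrix V V ℝ} (hA : A ∈ SOfGraph G)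
    {l m : ℝ} (hlm : (A - algebraMap ℝ _ l) * (A - algebraMap ℝ _ m) = 0) {u x : V}
    (hux : u ≠ x) (hadj : ¬G.Adj u x) (s : V) : G.commonNeighbors u x ≠ {s} := by
  intro hs
  have hAux : A u x = 0 := not_not.mp (mt (hA.2 u x hux).mp hadj)
  have hsq : (A * A) u x = 0 := by
    have hexpand : (A - algebraMap ℝ _ l) * (A - algebraMap ℝ _ m)
        = A * A - (l + m) • A + (l * m) • 1 := by
      simp only [Algebra.algebraMap_eq_smul_one, sub_mul, mul_sub, smul_mul_assoc,
        mul_smul_comm, one_mul, mul_one, smul_sub, smul_smul, add_smul, mul_comm m l]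
      abel
    simpa [hexpand, hAux, Matrix.one_apply_ne hux] using congrFun (congrFun hlm u) x
  obtain ⟨hus, hxs⟩ := G.mem_commonNeighbors.mp (hs ▸ Set.mem_singleton s)
  rw [Matrix.mul_apply, Finset.sum_eq_single s _ (by simp)] at hsq
  · exact mul_ne_zero ((hA.2 u s hus.ne).mpr hus) ((hA.2 s x hxs.ne.symm).mpr hxs.symm) hsq
  · intro y _ hys
    by_contra hy
    obtain ⟨huy, hyx⟩ := mul_ne_zero_iff.mp hy
    have hy_common : y ∈ G.commonNeighbors u x := G.mem_commonNeighbors.mpr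
      ⟨(hA.2 u y (by rintro rfl; exact hyx hAux)).mp huy,
        ((hA.2 y x (by rintro rfl; exact huy hAux)).mp hyx).symm⟩
    rw [hs] at hy_common
    exact hys hy_common

theorem commonNeighbors_ne_singleton_of_qGraph_eq_two (hq : qGraph G = 2) {u x : V}
    (hux : u ≠ x) (hadj : ¬G.Adj u x) (s : V) : G.commonNeighbors u x ≠ {s} := by
  have hmem : qGraph G ∈ (fun A => (spectrum ℝ A).ncard) '' SOfGraph G :=
    Nat.sInf_mem (Set.nonempty_iff_ne_empty.mpr fun h => by simp [qGraph, h] at hq)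
  obtain ⟨A, hA, hA2⟩ := hmem
  obtain ⟨l, m, -, hspec⟩ := Set.ncard_eq_two.mp (hA2.trans hq)
  have hsa : IsSelfAdjoint A := hA.1
  exact commonNeighbors_ne_singleton_of_mem_SOfGraph hA
    (hsa.sub_algebraMap_mul_sub_algebraMap_eq_zero hspec.subset) hux hadj s

end SOfGraph

namespace SimpleGraph

open Finset

variable {V : Type*} {G : SimpleGraph V} {v u : V}

theorem dist_ne_dist_of_adj (hconn : G.Connected) {k : ℕ}
    (hind : ∀ i : ℕ, 1 ≤ i → i ≤ k →
      ∀ w₁ w₂ : V, G.dist v w₁ = i → G.dist v w₂ = i → ¬ G.Adj w₁ w₂)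
    (hu : G.dist v u ≤ k) {w : V} (huw : G.Adj u w) : G.dist v w ≠ G.dist v u := by
  intro h
  rcases Nat.eq_zero_or_pos (G.dist v u) with h0 | hpos
  · rw [h0, hconn.dist_eq_zero_iff] at h
    rw [hconn.dist_eq_zero_iff] at h0
    exact huw.ne (h0.symm.trans h)
  · exact hind _ hpos hu u w rfl h huw

section Layers

variable [Fintype V]

noncomputable def predecessors (G : SimpleGraph V) [DecidableRel G.Adj] (v u : V) : Finset V :=
  {w | G.Adj u w ∧ G.dist v w + 1 = G.dist v u}

noncomputable def successors (G : SimpleGraph V) [DecidableRel G.Adj] (v u : V) : Finset V :=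
  {w | G.Adj u w ∧ G.dist v w = G.dist v u + 1}

variable [DecidableRel G.Adj]

theorem mem_predecessors {w : V} :
    w ∈ G.predecessors v u ↔ G.Adj u w ∧ G.dist v w + 1 = G.dist v u := by
  simp [predecessors]

theorem mem_successors {w : V} :
    w ∈ G.successors v u ↔ G.Adj u w ∧ G.dist v w = G.dist v u + 1 := by
  simp [successors]

theorem degree_le_card_predecessors_add_card_successors [DecidableEq V]
    (hlevel : ∀ w, G.Adj u w → G.dist v w ≠ G.dist v u) :
    G.degree u ≤ #(G.predecessors v u) + #(G.successors v u) := by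
  rw [← card_neighborFinset_eq_degree]
  refine (card_le_card fun w hw => ?_).trans (card_union_le _ _)
  rw [mem_neighborFinset] at hw
  have := hlevel w hw
  rcases hw.diff_dist_adj (u := v) with h | h | h
  · exact absurd h this
  · exact mem_union_right _ (mem_successors.mpr ⟨hw, h⟩)
  · exact mem_union_left _ (mem_predecessors.mpr ⟨hw, by omega⟩)

theorem successors_nonempty [DecidableEq V] (hdeg : 3 ≤ G.degree u)
    (hpred : #(G.predecessors v u) ≤ 2) (hlevel : ∀ w, G.Adj u w → G.dist v w ≠ G.dist v u) :
    (G.successors v u).Nonempty := by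
  have := degree_le_card_predecessors_add_card_successors hlevel
  exact card_pos.mp (by omega)

theorem one_lt_card_successors
    (hcommon : ∀ u x : V, u ≠ x → ¬G.Adj u x → ∀ s, G.commonNeighbors u x ≠ {s})
    (hu : (G.successors v u).Nonempty)
    (hsucc : ∀ s ∈ G.successors v u, (G.successors v s).Nonempty) :
    1 < #(G.successors v u) := by
  by_contra! hle
  obtain ⟨s, hs⟩ := card_eq_one.mp (le_antisymm hle hu.card_pos)
  have hus : s ∈ G.successors v u := hs ▸ mem_singleton_self s
  obtain ⟨x, hsx⟩ := hsucc s hus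
  rw [mem_successors] at hus hsx
  have hxdist : G.dist v x = G.dist v u + 2 := by omega
  refine hcommon u x (by rintro rfl; omega) (fun h => ?_) s ?_
  · rcases h.diff_dist_adj (u := v) with h' | h' | h' <;> omega
  ext y
  rw [mem_commonNeighbors, Set.mem_singleton_iff]
  constructor
  · rintro ⟨huy, hxy⟩
    have hydist : G.dist v y = G.dist v u + 1 := by
      rcases huy.diff_dist_adj (u := v) with h | h | h <;>
        rcases hxy.diff_dist_adj (u := v) with h' | h' | h' <;> omega
    simpa [hs] using (mem_successors.mpr ⟨huy, hydist⟩ : y ∈ G.successors v u)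
  · rintro rfl
    exact ⟨hus.1, hsx.1.symm⟩

theorem card_level_le_card_level_succ (i : ℕ)
    (hsucc : ∀ u, G.dist v u = i → 2 ≤ #(G.successors v u))
    (hpred : ∀ w, G.dist v w = i + 1 → #(G.predecessors v w) ≤ 2) :
    #({w | G.dist v w = i} : Finset V) ≤ #({w | G.dist v w = i + 1} : Finset V) := by
  have := card_mul_le_card_mul G.Adj (m := 2) (n := 2)
    (s := ({w | G.dist v w = i} : Finset V)) (t := {w | G.dist v w = i + 1})
    (fun u hu => by
      rw [mem_filter] at hu
      convert hsucc u hu.2 using 2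
      ext w
      simp [mem_bipartiteAbove, mem_successors, hu.2, and_comm])
    (fun w hw => by
      rw [mem_filter] at hw
      convert hpred w hw.2 using 2
      ext u
      simp [mem_bipartiteBelow, mem_predecessors, hw.2, G.adj_comm u w, and_comm])
  omega

theorem card_predecessors_le_two (hconn : G.Connected) {k : ℕ}
    (hpred : ∀ i : ℕ, 2 ≤ i → i ≤ k → ∀ u : V, G.dist v u = i →
      {w : V | G.Adj u w ∧ G.dist v w = i - 1}.ncard = 2) (hu : G.dist v u ≤ k) :
    #(G.predecessors v u) ≤ 2 := by
  rcases le_or_gt (G.dist v u) 1 with hle | hgt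
  · calc #(G.predecessors v u) ≤ #({v} : Finset V) := card_le_card fun w hw => by
          rw [mem_predecessors] at hw
          rw [mem_singleton, eq_comm, ← hconn.dist_eq_zero_iff]
          omega
      _ ≤ 2 := by simp
  · have hset : (G.predecessors v u : Set V) =
        {w | G.Adj u w ∧ G.dist v w = G.dist v u - 1} := by
      ext w
      rw [mem_coe, mem_predecessors]
      exact and_congr_right fun _ => by omega
    rw [← Set.ncard_coe_finset, hset, hpred _ hgt hu u rfl]

end Layers

end SimpleGraph

open SimpleGraph in
theorem stmt11_general {V : Type*} [Fintype V] [DecidableEq V] (G : SimpleGraph V)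
    (hconn : G.Connected) (hq : qGraph G = 2)
    (hdeg : ∀ w : V, 3 ≤ (G.neighborSet w).ncard)
    (v : V)
    (hpred : ∀ i : ℕ, 2 ≤ i → i ≤ graphEccent G v - 1 → ∀ u : V, G.dist v u = i →
      {w : V | G.Adj u w ∧ G.dist v w = i - 1}.ncard = 2)
    (hind : ∀ i : ℕ, 1 ≤ i → i ≤ graphEccent G v - 1 →
      ∀ w₁ w₂ : V, G.dist v w₁ = i → G.dist v w₂ = i → ¬ G.Adj w₁ w₂) :
    ∀ j : ℕ, 1 ≤ j → j ≤ graphEccent G v - 1 →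
      {w : V | G.dist v w = j - 1}.ncard ≤ {w : V | G.dist v w = j}.ncard := by
  classical
  have hsucc : ∀ u, G.dist v u ≤ graphEccent G v - 1 → (G.successors v u).Nonempty :=
    fun u hu => successors_nonempty
      (by rw [← card_neighborSet_eq_degree, ← Nat.card_eq_fintype_card]; exact hdeg u)
      (card_predecessors_le_two hconn hpred hu) fun _ => dist_ne_dist_of_adj hconn hind hu
  intro j hj hjε
  obtain ⟨i, rfl⟩ : ∃ i, j = i + 1 := ⟨j - 1, by omega⟩
  simp only [Set.ncard_eq_toFinset_card', Set.toFinset_ofPred, Nat.add_sub_cancel]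
  refine card_level_le_card_level_succ i (fun u hu => ?_)
    fun w hw => card_predecessors_le_two hconn hpred (by omega)
  refine one_lt_card_successors (fun u x => commonNeighbors_ne_singleton_of_qGraph_eq_two hq)
    (hsucc u (by omega)) fun s hs => hsucc s ?_
  rw [mem_successors] at hs
  omega

/-- Let `G` be connected on `n ≥ 3` vertices with `q(G) = 2` and minimum degree at
least `3`, and let `v` be a vertex. If every vertex of `N_i(v)` for
`2 ≤ i ≤ ε(v) - 1` has exactly two predecessors and each `N_i(v)` for
`1 ≤ i ≤ ε(v) - 1` is independent, then the truncated distance sequence of `v`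
is nondecreasing. -/
theorem stmt11 {V : Type*} [Fintype V] [DecidableEq V] (G : SimpleGraph V)
    (hconn : G.Connected) (hn : 3 ≤ Fintype.card V) (hq : qGraph G = 2)
    (hdeg : ∀ w : V, 3 ≤ (G.neighborSet w).ncard)
    (v : V)
    (hpred : ∀ i : ℕ, 2 ≤ i → i ≤ graphEccent G v - 1 → ∀ u : V, G.dist v u = i →
      {w : V | G.Adj u w ∧ G.dist v w = i - 1}.ncard = 2)
    (hind : ∀ i : ℕ, 1 ≤ i → i ≤ graphEccent G v - 1 →
      ∀ w₁ w₂ : V, G.dist v w₁ = i → G.dist v w₂ = i → ¬ G.Adj w₁ w₂) :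
    ∀ j : ℕ, 1 ≤ j → j ≤ graphEccent G v - 1 →
      {w : V | G.dist v w = j - 1}.ncard ≤ {w : V | G.dist v w = j}.ncard :=
  stmt11_general G hconn hq hdeg v hpred hind
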